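/- Given a linear presymplectic gauge PDE (E, Q₀, ω, L₀) and homogeneous components Q_i (vertical, field-degree i) and L_i (field-degree i+2) for 1 ≤ i ≤ N satisfying ι_{Q_i}ω + dL_i ∈ I and Q₀L_i = -½ Σ_{k=1}^{i-1} Q_k L_{i-k}, the partial sums Q_(N) = Q₀+…+Q_N, L_(N) = L₀+…+L_N satisfy ι_{Q_(N)}ω + dL_(N) ∈ I and Q_(N)L_(N) + ½ ι_{Q_(N)}ι_{Q_(N)}ω = O(N+3), i.e., its components of field-degree ≤ N+2 vanish. -/
import Mathlib


/-- Proposition 3.1 of the paper: Given a linear presymplectic gauge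
PDE `(E, Q₀, ω, L₀)` and vertical homogeneous components `Q_i` (field-degree `i`)
and `L_i` (field-degree `i+2`) for `1 ≤ i ≤ N` satisfying `ι_{Q_i}ω + dL_i ∈ I` and
`Q₀L_i = -½ Σ_{k=1}^{i-1} Q_k L_{i-k}`, the partial sums `Q_(N)`, `L_(N)` satisfy
`ι_{Q_(N)}ω + dL_(N) ∈ I` and `Q_(N)L_(N) + ½ ι_{Q_(N)}ι_{Q_(N)}ω = O(N+3)`, i.e.
all homogeneous components of field-degree `≤ N+2` vanish.

Abstraction: forms form a module `Ω`; `comp m` extracts the field-degree-`m`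
component; `iQ i` is contraction with `Q_i`; the action of `Q_i` on a function `f`
is `iQ i (d f)`; the field-degree bookkeeping (`iQ i (iQ j ω)` and `iQ i (d (L j))`
have field-degree `i+j+2`), the linear gPDE master equation for `(Q₀, L₀)`, the
symmetry of double contractions of `ω`, and the verticality identity
`ι_{Q_l}ι_{Q_m}ω = -Q_l L_m` for `l ≥ 1` are hypotheses. -/
theorem presymplectic_recursive_deformation
    {Ω : Type*} [AddCommGroup Ω] [Module ℚ Ω]
    (I : Submodule ℚ Ω)
    (d : Ω →ₗ[ℚ] Ω) (comp : ℕ → Ω →ₗ[ℚ] Ω)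
    (iQ : ℕ → Ω →ₗ[ℚ] Ω) (L : ℕ → Ω) (ω : Ω) (N : ℕ)
    (hordQQ : ∀ i j m, m ≠ i + j + 2 → comp m (iQ i (iQ j ω)) = 0)
    (hordQL : ∀ i j m, m ≠ i + j + 2 → comp m (iQ i (d (L j))) = 0)
    (hbase : iQ 0 (d (L 0)) + (1/2 : ℚ) • iQ 0 (iQ 0 ω) = 0)
    (hsym : ∀ i j, iQ i (iQ j ω) = iQ j (iQ i ω))
    (hI : ∀ i ≤ N, iQ i ω + d (L i) ∈ I)
    (hrec : ∀ i, 1 ≤ i → i ≤ N →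
      iQ 0 (d (L i)) = -(1/2 : ℚ) • ∑ k ∈ Finset.Ico 1 i, iQ k (d (L (i - k))))
    (hvert : ∀ l m, 1 ≤ l → iQ l (iQ m ω) = - iQ l (d (L m))) :
    ((∑ i ∈ Finset.range (N+1), iQ i) ω + d (∑ i ∈ Finset.range (N+1), L i) ∈ I) ∧
    (∀ m ≤ N + 2, comp m
      ((∑ i ∈ Finset.range (N+1), ∑ j ∈ Finset.range (N+1), iQ i (d (L j)))
        + (1/2 : ℚ) •
          ∑ i ∈ Finset.range (N+1), ∑ j ∈ Finset.range (N+1), iQ i (iQ j ω)) = 0) := by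
  constructor
  · have h1 : (∑ i ∈ Finset.range (N+1), iQ i) ω = ∑ i ∈ Finset.range (N+1), iQ i ω := by
      simp [LinearMap.sum_apply]
    rw [h1, map_sum, ← Finset.sum_add_distrib]
    exact Submodule.sum_mem I fun i hi =>
      hI i (Nat.lt_succ_iff.mp (Finset.mem_range.mp hi))
  · intro m hm
    -- key algebraic identity on the diagonal
    have key : ∀ n ≤ N,
        ∑ i ∈ Finset.range (n+1),
          (iQ i (d (L (n-i))) + (1/2:ℚ) • iQ i (iQ (n-i) ω)) = 0 := by
      intro n hn
      match n with
      | 0 => simpa using hbase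
      | Nat.succ k =>
        have hn1 : 1 ≤ k + 1 := Nat.succ_le_succ (Nat.zero_le k)
        rw [Finset.sum_range_succ']
        have h0 : iQ 0 (d (L (k+1-0))) + (1/2:ℚ) • iQ 0 (iQ (k+1-0) ω)
            = -(1/2:ℚ) • ∑ j ∈ Finset.Ico 1 (k+1), iQ j (d (L (k+1-j)))
              + (1/2:ℚ) • (- iQ (k+1) (d (L 0))) := by
          simp only [Nat.sub_zero]
          rw [hrec (k+1) hn1 hn, hsym 0 (k+1), hvert (k+1) 0 hn1]
        rw [h0]
        have hterm : ∀ i ∈ Finset.range (k+1),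
            iQ (i+1) (d (L (k+1-(i+1)))) + (1/2:ℚ) • iQ (i+1) (iQ (k+1-(i+1)) ω)
            = (1/2:ℚ) • iQ (i+1) (d (L (k+1-(i+1)))) := by
          intro i _
          rw [hvert (i+1) (k+1-(i+1)) (Nat.succ_le_succ (Nat.zero_le i))]
          module
        rw [Finset.sum_congr rfl hterm, ← Finset.smul_sum]
        have hre : ∑ i ∈ Finset.range (k+1), iQ (i+1) (d (L (k+1-(i+1))))
            = (∑ j ∈ Finset.Ico 1 (k+1), iQ j (d (L (k+1-j)))) + iQ (k+1) (d (L 0)) := by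
          have h2 : ∑ j ∈ Finset.Ico 1 (k+2), iQ j (d (L (k+1-j)))
              = (∑ j ∈ Finset.Ico 1 (k+1), iQ j (d (L (k+1-j)))) + iQ (k+1) (d (L (k+1-(k+1)))) :=
            Finset.sum_Ico_succ_top hn1 _
          rw [Finset.sum_Ico_eq_sum_range] at h2
          simpa [add_comm 1, Nat.sub_self] using h2
        rw [hre]
        module
    -- now push comp inside and collapse the double sums
    by_cases h2 : 2 ≤ m
    · obtain ⟨n, rfl⟩ : ∃ n, m = n + 2 := ⟨m - 2, (Nat.sub_add_cancel h2).symm⟩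
      have hnN : n ≤ N := by omega
      set g : ℕ → ℕ → Ω := fun i j =>
        comp (n+2) (iQ i (d (L j))) + (1/2:ℚ) • comp (n+2) (iQ i (iQ j ω)) with hg
      have hmain : comp (n+2)
          ((∑ i ∈ Finset.range (N+1), ∑ j ∈ Finset.range (N+1), iQ i (d (L j)))
            + (1/2 : ℚ) •
              ∑ i ∈ Finset.range (N+1), ∑ j ∈ Finset.range (N+1), iQ i (iQ j ω))
          = ∑ i ∈ Finset.range (N+1), ∑ j ∈ Finset.range (N+1), g i j := by
        simp [hg, map_sum, Finset.smul_sum, Finset.sum_add_distrib]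
      rw [hmain]
      have hzero : ∀ i j, i + j ≠ n → g i j = 0 := by
        intro i j hij
        have h3 : n + 2 ≠ i + j + 2 := by omega
        simp [hg, hordQQ i j _ h3, hordQL i j _ h3]
      have hinner : ∀ i ∈ Finset.range (N+1),
          ∑ j ∈ Finset.range (N+1), g i j = if i ≤ n then g i (n-i) else 0 := by
        intro i _
        by_cases hi : i ≤ n
        · rw [if_pos hi]
          refine Finset.sum_eq_single_of_mem (n-i)
            (Finset.mem_range.mpr (by omega)) ?_
          intro j _ hj
          exact hzero i j (by omega)
        · rw [if_neg hi]
          exact Finset.sum_eq_zero fun j _ => hzero i j (by omega)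
      rw [Finset.sum_congr rfl hinner]
      have houter : ∑ i ∈ Finset.range (N+1), (if i ≤ n then g i (n-i) else 0)
          = ∑ i ∈ Finset.range (n+1), g i (n-i) := by
        rw [← Finset.sum_subset (Finset.range_subset_range.mpr (by omega : n+1 ≤ N+1))
          (fun i _ hi => if_neg (by simp at hi ⊢; omega))]
        exact Finset.sum_congr rfl fun i hi =>
          if_pos (Nat.lt_succ_iff.mp (Finset.mem_range.mp hi))
      rw [houter]
      have : ∑ i ∈ Finset.range (n+1), g i (n-i)
          = comp (n+2) (∑ i ∈ Finset.range (n+1),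
              (iQ i (d (L (n-i))) + (1/2:ℚ) • iQ i (iQ (n-i) ω))) := by
        simp [hg, map_sum]
      rw [this, key n hnN, map_zero]
    · have hz : ∀ i j, comp m (iQ i (d (L j))) = 0 ∧ comp m (iQ i (iQ j ω)) = 0 :=
        fun i j => ⟨hordQL i j m (by omega), hordQQ i j m (by omega)⟩
      simp [map_sum, Finset.smul_sum, (fun i j => (hz i j).1), (fun i j => (hz i j).2)]
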